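/- Let A = (α e₁ + β e₂) e₁* and B = (γ e₁ + δ e₂) e₂* be rank-one matrices in M₂(ℂ). Then every matrix X ∈ M₂(ℂ) satisfying both A ⊥ X and B ⊥ X (Birkhoff–James) has rank at most one if and only if the vectors (α, β) and (γ, δ) are nonzero scalar multiples of each other. -/

import Mathlib

/-!
For a rank-one matrix `R = u v*`, Birkhoff–James orthogonality `R ⊥ X` is equivalent to
`u* X v = 0`, in any dimension. If `u* X v = 0`, testing `R + c X` on `v` against `u` gives
`‖R + c X‖ ≥ ‖u‖ ‖v‖ = ‖R‖`. Conversely, the operator norm of `R` equals its Frobenius norm, and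
`‖R + c X‖_F² = ‖R‖_F² + 2 Re (c u* X v) + |c|² ‖X‖_F²` drops below `‖R‖²` when `c` is a small
multiple of `-conj (u* X v)`; the operator norm is dominated by the Frobenius norm.

For the two matrices of the theorem, `A ⊥ X` and `B ⊥ X` therefore say that `(ᾱ, β̄)` kills the
first column of `X` and `(γ̄, δ̄)` the second. If `(α, β) = c (γ, δ)`, the vector `(γ̄, δ̄)` kills
both columns, so `det X = 0`; otherwise `X = [[-β̄, -δ̄], [ᾱ, γ̄]]` satisfies both conditions and
has `det X = conj (αδ - βγ) ≠ 0`.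
-/

open Matrix

/-- The operator (spectral) norm of a complex matrix, induced by the Euclidean norm on `ℂⁿ`. -/
noncomputable def opNorm {n : ℕ} (A : Matrix (Fin n) (Fin n) ℂ) : ℝ :=
  ‖Matrix.toEuclideanCLM (𝕜 := ℂ) (n := Fin n) A‖

/-- Birkhoff–James orthogonality of matrices with respect to the operator norm. -/
def BJ {n : ℕ} (A B : Matrix (Fin n) (Fin n) ℂ) : Prop :=
  ∀ c : ℂ, opNorm A ≤ opNorm (A + c • B)

open InnerProductSpace WithLp

section InnerProductSpace

variable {𝕜 E : Type*} [RCLike 𝕜] [NormedAddCommGroup E] [InnerProductSpace 𝕜 E]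

theorem norm_rankOne_le_norm_add_smul_of_inner_eq_zero {x y : E} {T : E →L[𝕜] E}
    (h : inner 𝕜 x (T y) = 0) (c : 𝕜) : ‖rankOne 𝕜 x y‖ ≤ ‖rankOne 𝕜 x y + c • T‖ := by
  set S := rankOne 𝕜 x y + c • T
  have hSy : inner 𝕜 x (S y) = ((‖x‖ * ‖y‖) ^ 2 : ℝ) := by
    simp only [S, _root_.add_apply, _root_.smul_apply, rankOne_apply, inner_add_right,
      inner_smul_right, h, inner_self_eq_norm_sq_to_K, mul_zero, add_zero]
    push_cast
    ring
  have key : (‖x‖ * ‖y‖) ^ 2 ≤ ‖x‖ * ‖y‖ * ‖S‖ :=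
    calc (‖x‖ * ‖y‖) ^ 2 = ‖inner 𝕜 x (S y)‖ := by
          rw [hSy, RCLike.norm_ofReal, abs_of_nonneg (by positivity)]
      _ ≤ ‖x‖ * (‖S‖ * ‖y‖) := (norm_inner_le_norm _ _).trans (by gcongr; exact S.le_opNorm y)
      _ = ‖x‖ * ‖y‖ * ‖S‖ := by ring
  rw [norm_rankOne]
  rcases (by positivity : 0 ≤ ‖x‖ * ‖y‖).eq_or_lt with h0 | h0
  · rw [← h0]; positivity
  · nlinarith

end InnerProductSpace

theorem toEuclideanCLM_vecMulVec {𝕜 n : Type*} [RCLike 𝕜] [Fintype n] [DecidableEq n]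
    (u v : n → 𝕜) :
    toEuclideanCLM (𝕜 := 𝕜) (vecMulVec u (star v)) = rankOne 𝕜 (toLp 2 u) (toLp 2 v) := by
  apply ContinuousLinearMap.coe_injective
  rw [coe_toEuclideanCLM_eq_toEuclideanLin, ← symm_toEuclideanLin_rankOne,
    LinearEquiv.apply_symm_apply]

theorem opNorm_vecMulVec {n : ℕ} (u v : Fin n → ℂ) :
    opNorm (vecMulVec u (star v)) = ‖toLp 2 u‖ * ‖toLp 2 v‖ := by
  rw [opNorm, toEuclideanCLM_vecMulVec, norm_rankOne]

section Frobenius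

attribute [local instance] Matrix.frobeniusNormedAddCommGroup

theorem opNorm_le_frobenius_norm {n : ℕ} (M : Matrix (Fin n) (Fin n) ℂ) : opNorm M ≤ ‖M‖ := by
  refine ContinuousLinearMap.opNorm_le_bound _ (norm_nonneg _) fun x => ?_
  have := frobenius_norm_mul M (replicateCol Unit (ofLp x))
  rwa [← replicateCol_mulVec, frobenius_norm_replicateCol, frobenius_norm_replicateCol] at this

theorem frobenius_norm_sq {m n α : Type*} [Fintype m] [Fintype n] [NormedAddCommGroup α]
    (A : Matrix m n α) : ‖A‖ ^ 2 = ∑ i, ∑ j, ‖A i j‖ ^ 2 := by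
  simp_rw [frobenius_norm_def, ← Real.sqrt_eq_rpow, Real.rpow_two]
  exact Real.sq_sqrt (by positivity)

theorem frobenius_norm_vecMulVec_add_smul_sq {m n : Type*} [Fintype m] [Fintype n]
    (u : m → ℂ) (v : n → ℂ) (X : Matrix m n ℂ) (c : ℂ) :
    ‖vecMulVec u (star v) + c • X‖ ^ 2 = ‖toLp 2 u‖ ^ 2 * ‖toLp 2 v‖ ^ 2
      + 2 * (c * (star u ⬝ᵥ X *ᵥ v)).re + ‖c‖ ^ 2 * ‖X‖ ^ 2 := by
  have entry (i : m) (j : n) : ‖u i * star (v j) + c * X i j‖ ^ 2 = ‖u i‖ ^ 2 * ‖v j‖ ^ 2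
      + 2 * (c * (star (u i) * (X i j * v j))).re + ‖c‖ ^ 2 * ‖X i j‖ ^ 2 := by
    simp only [Complex.sq_norm, Complex.normSq_add, Complex.normSq_mul]
    rw [← Complex.conj_re]
    simp only [map_mul, Complex.star_def, Complex.conj_conj, Complex.normSq_conj]
    ring_nf
  simp only [frobenius_norm_sq, EuclideanSpace.norm_sq_eq, Matrix.add_apply, Matrix.smul_apply,
    vecMulVec_apply, Pi.star_apply, smul_eq_mul, entry, Finset.sum_add_distrib, ← Finset.mul_sum,
    Finset.sum_mul, dotProduct, mulVec, ← Complex.re_sum]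

theorem dotProduct_mulVec_eq_zero_of_bj {n : ℕ} {u v : Fin n → ℂ}
    {X : Matrix (Fin n) (Fin n) ℂ} (h : BJ (vecMulVec u (star v)) X) :
    star u ⬝ᵥ X *ᵥ v = 0 := by
  set t := star u ⬝ᵥ X *ᵥ v
  set K := ‖X‖ ^ 2
  -- with this `c`, `‖R + c X‖_F² = ‖R‖² - ‖t‖² (K + 2) / (K + 1)²`
  set c : ℂ := -star t / ((K + 1 : ℝ) : ℂ)
  have hct : (c * t).re = -‖t‖ ^ 2 / (K + 1) := by
    rw [div_mul_eq_mul_div, neg_mul, Complex.star_def, Complex.conj_mul', ← Complex.ofReal_pow,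
      ← Complex.ofReal_neg, ← Complex.ofReal_div, Complex.ofReal_re]
  have hc : ‖c‖ ^ 2 = ‖t‖ ^ 2 / (K + 1) ^ 2 := by
    rw [norm_div, norm_neg, norm_star, Complex.norm_real, Real.norm_of_nonneg (by positivity),
      div_pow]
  have hle : opNorm (vecMulVec u (star v)) ^ 2 ≤ ‖vecMulVec u (star v) + c • X‖ ^ 2 :=
    pow_le_pow_left₀ (norm_nonneg _) ((h c).trans (opNorm_le_frobenius_norm _)) 2
  rw [opNorm_vecMulVec, frobenius_norm_vecMulVec_add_smul_sq, hct, hc] at hle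
  by_contra ht
  have htpos : 0 < ‖t‖ := norm_pos_iff.mpr ht
  have hgain : 0 < ‖t‖ ^ 2 * (K + 2) / (K + 1) ^ 2 := by positivity
  have hgain_eq : ‖t‖ ^ 2 * (K + 2) / (K + 1) ^ 2
      = -(2 * (-‖t‖ ^ 2 / (K + 1)) + ‖t‖ ^ 2 / (K + 1) ^ 2 * K) := by
    field_simp
    ring
  linarith

end Frobenius

theorem bj_vecMulVec_iff {n : ℕ} (u v : Fin n → ℂ) (X : Matrix (Fin n) (Fin n) ℂ) :
    BJ (vecMulVec u (star v)) X ↔ star u ⬝ᵥ X *ᵥ v = 0 := by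
  refine ⟨dotProduct_mulVec_eq_zero_of_bj, fun h c => ?_⟩
  have hinner : inner ℂ (toLp 2 u) (toEuclideanCLM (𝕜 := ℂ) X (toLp 2 v)) = 0 := by
    rwa [toEuclideanCLM_toLp, EuclideanSpace.inner_toLp_toLp, dotProduct_comm]
  simpa only [opNorm, map_add, map_smul, toEuclideanCLM_vecMulVec] using
    norm_rankOne_le_norm_add_smul_of_inner_eq_zero hinner c

theorem rank_lt_card_of_det_eq_zero {K n : Type*} [Field K] [Fintype n] [DecidableEq n]
    {A : Matrix n n K} (h : A.det = 0) : A.rank < Fintype.card n := by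
  obtain ⟨v, hv, hAv⟩ := exists_mulVec_eq_zero_iff.mpr h
  have hker : 0 < Module.finrank K (LinearMap.ker A.mulVecLin) :=
    Module.finrank_pos_iff_exists_ne_zero.mpr
      ⟨⟨v, hAv⟩, fun h0 => hv (congrArg Subtype.val h0)⟩
  have hrank := LinearMap.finrank_range_add_finrank_ker A.mulVecLin
  rw [Module.finrank_fintype_fun_eq_card] at hrank
  rw [Matrix.rank]
  omega

theorem rank_le_one_iff_det_eq_zero {K : Type*} [Field K] (X : Matrix (Fin 2) (Fin 2) K) :
    X.rank ≤ 1 ↔ X.det = 0 := by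
  refine ⟨fun h => ?_, fun h => by simpa using rank_lt_card_of_det_eq_zero h⟩
  by_contra hdet
  rw [rank_of_det_ne_zero hdet] at h
  simp at h

theorem exists_ne_zero_smul_eq_of_mul_eq_mul {K ι : Type*} [Field K] {p q : ι → K}
    (hp : p ≠ 0) (hq : q ≠ 0) (h : ∀ i j, p i * q j = p j * q i) :
    ∃ k : K, k ≠ 0 ∧ p = k • q := by
  obtain ⟨i, hi⟩ : ∃ i, q i ≠ 0 := Function.ne_iff.mp hq
  refine ⟨p i / q i, div_ne_zero (fun hpi => hp (funext fun j => ?_)) hi, funext fun j => ?_⟩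
  · simpa [hpi, hi] using h j i
  · rw [Pi.smul_apply, smul_eq_mul, div_mul_eq_mul_div, eq_div_iff hi, h]

theorem stmt8 (α β γ δ : ℂ) (hab : ![α, β] ≠ 0) (hgd : ![γ, δ] ≠ 0)
    (A B : Matrix (Fin 2) (Fin 2) ℂ)
    (hA : A = Matrix.vecMulVec ![α, β] (star ![(1 : ℂ), 0]))
    (hB : B = Matrix.vecMulVec ![γ, δ] (star ![(0 : ℂ), 1])) :
    (∀ X : Matrix (Fin 2) (Fin 2) ℂ, BJ A X → BJ B X → X.rank ≤ 1) ↔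
      ∃ c : ℂ, c ≠ 0 ∧ ![α, β] = c • ![γ, δ] := by
  subst hA hB
  simp only [bj_vecMulVec_iff]
  constructor
  · intro hall
    set X : Matrix (Fin 2) (Fin 2) ℂ := of ![![-star β, -star δ], ![star α, star γ]]
    have hdet : X.det = star (α * δ - β * γ) := by
      rw [det_fin_two_of, star_sub, star_mul', star_mul']
      ring
    have hcross := (rank_le_one_iff_det_eq_zero X).mp
      (hall X (by simp [X, mul_comm]) (by simp [X, mul_comm]))
    rw [hdet, star_eq_zero, sub_eq_zero] at hcross
    refine exists_ne_zero_smul_eq_of_mul_eq_mul hab hgd fun i j => ?_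
    fin_cases i <;> fin_cases j <;> simp [hcross]
  · rintro ⟨c, hc, hpar⟩ X hXA hXB
    rw [hpar, star_smul, smul_dotProduct, smul_eq_zero, star_eq_zero, or_iff_right hc] at hXA
    have hker : star ![γ, δ] ᵥ* X = 0 := by
      rw [dotProduct_mulVec] at hXA hXB
      funext j
      fin_cases j
      · simpa [dotProduct, Fin.sum_univ_two] using hXA
      · simpa [dotProduct, Fin.sum_univ_two] using hXB
    exact (rank_le_one_iff_det_eq_zero X).mpr
      (exists_vecMul_eq_zero_iff.mp ⟨_, star_ne_zero.mpr hgd, hker⟩)
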